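/- arXiv:2605.03431 — 3 statements merged into one kernel-verified Lean document; each statement's English description precedes it below -/
import Mathlib

section
/- Let V be a finite set with weights w on unordered pairs, and let T be a maximum-weight spanning tree of the complete graph on V. Then for any two distinct vertices u, v, every path in T from u to v contains an edge xy with w(xy) ≥ w(uv). -/
/-!
If `u v` is an edge of `T`, the path is that single edge. Otherwise every edge `e` of the
`T`-path from `u` to `v` lies on the cycle that this path closes with `s(u, v)`, so `e` is not a
bridge of `T ⊔ edge u v`; deleting it leaves a connected graph with as many edges as `T`, i.e.
another spanning tree, of weight `W(T) + w(uv) - w(e)`. Maximality of `T` gives `w(uv) ≤ w(e)`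
for every edge of the path.
-/

open SimpleGraph

noncomputable def edgeWeightSum {V : Type*} [Fintype V] (w : Sym2 V → ℝ)
    (G : SimpleGraph V) : ℝ :=
  ∑ e ∈ G.edgeSet.toFinite.toFinset, w e

namespace SimpleGraph

variable {V : Type*} {G T : SimpleGraph V} {u v : V} {e : Sym2 V}

lemma Walk.IsPath.ne_of_mem_edges {p : G.Walk u v} (hp : p.IsPath) (he : e ∈ p.edges) :
    u ≠ v := by
  rintro rfl
  exact Path.notMem_edges_of_loop (p := ⟨p, hp⟩) he

lemma edgeSet_sup_edge_deleteEdges (huv : u ≠ v) (e : Sym2 V) :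
    ((G ⊔ edge u v).deleteEdges {e}).edgeSet = insert s(u, v) G.edgeSet \ {e} := by
  rw [edgeSet_deleteEdges, edgeSet_sup, edgeSet_edge_of_ne huv, Set.union_singleton]

lemma Walk.IsPath.not_isBridge_sup_edge {p : G.Walk u v} (hp : p.IsPath) (hadj : ¬G.Adj u v)
    (he : e ∈ p.edges) : ¬(G ⊔ edge u v).IsBridge e := by
  intro hbridge
  have hvu : (G ⊔ edge u v).Adj v u :=
    Or.inr ((edge_adj ..).mpr ⟨Or.inr ⟨rfl, rfl⟩, (hp.ne_of_mem_edges he).symm⟩)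
  have hcycle := Path.cons_isCycle ⟨p.mapLe le_sup_left, hp.mapLe le_sup_left⟩ hvu <| by
    rw [Walk.edges_mapLe_eq_edges, Sym2.eq_swap]
    exact fun h ↦ hadj (p.adj_of_mem_edges h)
  exact hbridge.notMem_edges_of_isCycle hcycle <| by
    simpa [Walk.edges_mapLe_eq_edges] using .inr he

lemma IsTree.sup_edge_deleteEdges [Finite V] (hT : T.IsTree) {p : T.Walk u v} (hp : p.IsPath)
    (hadj : ¬T.Adj u v) (he : e ∈ p.edges) : ((T ⊔ edge u v).deleteEdges {e}).IsTree := by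
  rw [isTree_iff_connected_and_card] at hT ⊢
  obtain ⟨hconn, hcard⟩ := hT
  induction e with | h x y =>
  refine ⟨(hconn.mono le_sup_left).connected_delete_edge_of_not_isBridge
    (hp.not_isBridge_sup_edge hadj he), ?_⟩
  rw [← hcard, Nat.card_coe_set_eq, Nat.card_coe_set_eq,
    edgeSet_sup_edge_deleteEdges (hp.ne_of_mem_edges he),
    Set.ncard_sdiff_singleton_add_one (Set.mem_insert_of_mem _ (p.edges_subset_edgeSet he)),
    Set.ncard_insert_of_notMem (show s(u, v) ∉ T.edgeSet from hadj)]

end SimpleGraph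

section Weights

variable {V : Type*} [Fintype V] (w : Sym2 V → ℝ)

lemma edgeWeightSum_eq_finsum (G : SimpleGraph V) :
    edgeWeightSum w G = ∑ᶠ e ∈ G.edgeSet, w e :=
  (finsum_mem_eq_finite_toFinset_sum _ _).symm

lemma edgeWeightSum_sup_edge_deleteEdges {G : SimpleGraph V} {u v : V} {e : Sym2 V}
    (huv : u ≠ v) (hadj : ¬G.Adj u v) (he : e ∈ G.edgeSet) :
    edgeWeightSum w ((G ⊔ edge u v).deleteEdges {e}) + w e =
      edgeWeightSum w G + w s(u, v) := by
  rw [edgeWeightSum_eq_finsum, edgeWeightSum_eq_finsum, edgeSet_sup_edge_deleteEdges huv,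
    add_comm, ← finsum_mem_insert w (Set.notMem_sdiff_of_mem (Set.mem_singleton e))
      (Set.toFinite _),
    Set.insert_sdiff_singleton, Set.insert_eq_of_mem (Set.mem_insert_of_mem _ he),
    finsum_mem_insert w (show s(u, v) ∉ G.edgeSet from hadj) (Set.toFinite _), add_comm]

def IsMaxWeightSpanningTree (T : SimpleGraph V) : Prop :=
  T.IsTree ∧ ∀ T' : SimpleGraph V, T'.IsTree → edgeWeightSum w T' ≤ edgeWeightSum w T

variable {w}

theorem IsMaxWeightSpanningTree.weight_le_of_mem_edges {T : SimpleGraph V}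
    (hT : IsMaxWeightSpanningTree w T) {u v : V} {p : T.Walk u v} (hp : p.IsPath)
    {e : Sym2 V} (he : e ∈ p.edges) : w s(u, v) ≤ w e := by
  obtain ⟨htree, hmax⟩ := hT
  by_cases hadj : T.Adj u v
  · have hp_eq : p = .cons hadj .nil :=
      congrArg Subtype.val ((htree.isAcyclic.subsingleton_path u v).elim ⟨p, hp⟩
        (Path.singleton hadj))
    subst hp_eq
    rw [Walk.edges_cons, Walk.edges_nil, List.mem_singleton] at he
    rw [he]
  · have hexchange := hmax _ (htree.sup_edge_deleteEdges hp hadj he)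
    have hweight := edgeWeightSum_sup_edge_deleteEdges w (hp.ne_of_mem_edges he) hadj
      (p.edges_subset_edgeSet he)
    linarith

end Weights

/-- MST bottleneck property: in a maximum-weight spanning tree of the complete
graph, every path between `u` and `v` contains an edge of weight at least `w s(u,v)`. -/
theorem stmt_0 {V : Type*} [Fintype V] (w : Sym2 V → ℝ)
    (T : SimpleGraph V) (hT : T.IsTree)
    (hmax : ∀ T' : SimpleGraph V, T'.IsTree → edgeWeightSum w T' ≤ edgeWeightSum w T)
    (u v : V) (huv : u ≠ v) (p : T.Walk u v) (hp : p.IsPath) :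
    ∃ e ∈ p.edges, w s(u, v) ≤ w e := by
  obtain ⟨e, he⟩ := List.exists_mem_of_ne_nil _ (Walk.edges_eq_nil.not.mpr (p.not_nil_of_ne huv))
  exact ⟨e, he, IsMaxWeightSpanningTree.weight_le_of_mem_edges ⟨hT, hmax⟩ hp he⟩
end

section
/- With the setup of the decomposition identity, diam(φ) ≥ M(φ) and diam(φ) ≥ diam(χ) for every 2-coloring φ of V. -/
/-!
The first inequality holds because every monochromatic tree edge is a monochromatic pair.
For the second, take a `χ`-monochromatic pair `u ≠ v` realising `diam(χ)`; if it is
`φ`-monochromatic we are done. Otherwise, since `χ` is proper on `T`, the tree path from `u` to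
`v` has even length, so it cannot alternate in `φ` between two endpoints of different
`φ`-colours: some edge `e` on it is `φ`-monochromatic. By the cycle property of a maximum
spanning tree, `w s(u, v) ≤ w e`, since otherwise exchanging `e` for `s(u, v)` would give a
heavier spanning tree.
-/

open SimpleGraph

/-- `pdiam w φ` : the partition diameter of the 2-coloring `φ`, i.e. the maximum
weight over `φ`-monochromatic pairs of distinct vertices (`⊥` if none). -/
noncomputable def pdiam {V : Type*} [Fintype V] [DecidableEq V]
    (w : Sym2 V → ℝ) (φ : V → Fin 2) : EReal :=
  Finset.sup (Finset.univ.filter fun uv : V × V => uv.1 ≠ uv.2 ∧ φ uv.1 = φ uv.2)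
    fun uv => (w s(uv.1, uv.2) : EReal)

/-- `treeM w T φ` : the maximum weight over `φ`-monochromatic edges of `T`
(`⊥` if none). -/
noncomputable def treeM {V : Type*} [Fintype V] [DecidableEq V]
    (w : Sym2 V → ℝ) (T : SimpleGraph V) [DecidableRel T.Adj] (φ : V → Fin 2) : EReal :=
  Finset.sup (Finset.univ.filter fun uv : V × V => T.Adj uv.1 uv.2 ∧ φ uv.1 = φ uv.2)
    fun uv => (w s(uv.1, uv.2) : EReal)

section EdgeWeightSum

variable {V : Type*} [Fintype V] (w : Sym2 V → ℝ) {G : SimpleGraph V}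

lemma edgeWeightSum_sup_edge {u v : V} (hne : u ≠ v) (hadj : ¬ G.Adj u v) :
    edgeWeightSum w (G ⊔ edge u v) = edgeWeightSum w G + w s(u, v) := by
  classical
  have hset : (G ⊔ edge u v).edgeSet.toFinite.toFinset =
      insert s(u, v) G.edgeSet.toFinite.toFinset := by
    ext; simp [edgeSet_edge_of_ne hne]
  rw [edgeWeightSum, edgeWeightSum, hset, Finset.sum_insert (by simpa using hadj), add_comm]

lemma edgeWeightSum_deleteEdges_singleton {e : Sym2 V} (he : e ∈ G.edgeSet) :
    edgeWeightSum w (G.deleteEdges {e}) = edgeWeightSum w G - w e := by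
  classical
  have hset : (G.deleteEdges {e}).edgeSet.toFinite.toFinset =
      G.edgeSet.toFinite.toFinset.erase e := by
    ext; simp [and_comm]
  rw [edgeWeightSum, edgeWeightSum, hset, Finset.sum_erase_eq_sub (by simpa using he)]

end EdgeWeightSum

namespace SimpleGraph

variable {V : Type*}

section Reachability

variable {G H : SimpleGraph V}

lemma Reachable.of_forall_adj (hGH : ∀ x y, G.Adj x y → H.Reachable x y) {u v : V}
    (h : G.Reachable u v) : H.Reachable u v := by
  rw [reachable_iff_reflTransGen] at h ⊢
  exact h.lift' id fun x y hxy => (reachable_iff_reflTransGen x y).1 (hGH x y hxy)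

lemma Reachable.deleteEdges_or (a b : V) {z : V} (h : G.Reachable z a) :
    (G.deleteEdges {s(a, b)}).Reachable z a ∨ (G.deleteEdges {s(a, b)}).Reachable z b := by
  obtain ⟨p⟩ := h
  suffices ∀ {x y} (q : G.Walk x y), (G.deleteEdges {s(a, b)}).Reachable y a ∨
      (G.deleteEdges {s(a, b)}).Reachable y b →
      (G.deleteEdges {s(a, b)}).Reachable x a ∨ (G.deleteEdges {s(a, b)}).Reachable x b from
    this p (.inl .rfl)
  intro x y q hy
  induction q with
  | nil => exact hy
  | @cons x x' _ hxx' _ ih =>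
    by_cases he : s(x, x') = s(a, b)
    · rcases Sym2.eq_iff.1 he with ⟨rfl, -⟩ | ⟨rfl, -⟩
      · exact .inl .rfl
      · exact .inr .rfl
    · have hxx'' : (G.deleteEdges {s(a, b)}).Adj x x' := by simp [hxx', he]
      exact (ih hy).imp hxx''.reachable.trans hxx''.reachable.trans

end Reachability

lemma Walk.eq_iff_eq_of_forall_mem_edges_ne {G : SimpleGraph V} {u v : V} {χ φ : V → Fin 2}
    (p : G.Walk u v) (hχ : ∀ a b, s(a, b) ∈ p.edges → χ a ≠ χ b)
    (hφ : ∀ a b, s(a, b) ∈ p.edges → φ a ≠ φ b) :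
    χ u = χ v ↔ φ u = φ v := by
  have key : ∀ a b c : Fin 2, a ≠ b → (a = c ↔ b ≠ c) := by decide
  induction p with
  | nil => simp
  | @cons u x v _ q ih =>
    have ih := ih (fun a b h => hχ a b (by simp [h])) (fun a b h => hφ a b (by simp [h]))
    rw [key _ _ _ (hχ u x (by simp)), key _ _ _ (hφ u x (by simp))]
    exact not_congr ih

section TreeExchange

variable {T : SimpleGraph V} {u v : V} {p : T.Walk u v} {e : Sym2 V}

lemma IsTree.not_reachable_deleteEdges_of_mem_edges (hT : T.IsTree) (hp : p.IsPath)
    (he : e ∈ p.edges) : ¬ (T.deleteEdges {e}).Reachable u v := by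
  classical
  rintro ⟨q⟩
  have hqe : e ∉ q.edges := fun h => by simpa using q.edges_subset_edgeSet h
  have hpq : (⟨p, hp⟩ : T.Path u v) = (q.mapLe (T.deleteEdges_le _)).toPath :=
    (hT.isAcyclic.subsingleton_path u v).elim _ _
  have he' : e ∈ ((q.mapLe (T.deleteEdges_le _)).toPath : T.Walk u v).edges := hpq ▸ he
  have := Walk.edges_toPath_subset_edges _ he'
  rw [Walk.edges_mapLe_eq_edges] at this
  exact hqe this

lemma IsTree.deleteEdges_sup_edge (hT : T.IsTree) (hp : p.IsPath) (he : e ∈ p.edges) :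
    (T.deleteEdges {e} ⊔ edge u v).IsTree := by
  have hsep := hT.not_reachable_deleteEdges_of_mem_edges hp he
  have hne : u ≠ v := by rintro rfl; exact hsep .rfl
  obtain ⟨a, b⟩ := e
  set T' := T.deleteEdges {s(a, b)} ⊔ edge u v
  have hle : T.deleteEdges {s(a, b)} ≤ T' := le_sup_left
  have huv : T'.Reachable u v := Adj.reachable (by simp [T', edge_adj, hne])
  -- `u` and `v` lie in different components of `T - e`, each containing an endpoint of `e`.
  have hT'ab : T'.Reachable a b := by
    have hconn := hT.connected.preconnected
    rcases (hconn u a).deleteEdges_or a b with hua | hub <;>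
      rcases (hconn v a).deleteEdges_or a b with hva | hvb
    · exact absurd (hua.trans hva.symm) hsep
    · exact ((hua.mono hle).symm.trans huv).trans (hvb.mono hle)
    · exact ((hva.mono hle).symm.trans huv.symm).trans (hub.mono hle)
    · exact absurd (hub.trans hvb.symm) hsep
  have := hT.connected.nonempty
  have hacyc := hT.isAcyclic.anti (T.deleteEdges_le {s(a, b)})
  refine ⟨⟨fun x y => ?_⟩, hacyc.sup_edge_of_not_reachable hsep⟩
  refine (hT.connected.preconnected x y).of_forall_adj fun x y hxy => ?_
  by_cases hxy' : s(x, y) = s(a, b)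
  · rcases Sym2.eq_iff.1 hxy' with ⟨rfl, rfl⟩ | ⟨rfl, rfl⟩
    · exact hT'ab
    · exact hT'ab.symm
  · exact (hle (by simp [hxy, hxy'])).reachable

variable [Fintype V] {w : Sym2 V → ℝ}

lemma IsTree.weight_le_of_mem_edges (hT : T.IsTree)
    (hmax : ∀ T' : SimpleGraph V, T'.IsTree → edgeWeightSum w T' ≤ edgeWeightSum w T)
    (hne : u ≠ v) (hp : p.IsPath) (he : e ∈ p.edges) : w s(u, v) ≤ w e := by
  by_cases hadj : T.Adj u v
  · have hpq : (⟨p, hp⟩ : T.Path u v) = Path.singleton hadj :=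
      (hT.isAcyclic.subsingleton_path u v).elim _ _
    obtain rfl : p = .cons hadj .nil := congrArg Subtype.val hpq
    simp only [Walk.edges_cons, Walk.edges_nil, List.mem_singleton] at he
    rw [he]
  · have hexchange := hmax _ (hT.deleteEdges_sup_edge hp he)
    rw [edgeWeightSum_sup_edge w hne (fun h => hadj (T.deleteEdges_le _ h)),
      edgeWeightSum_deleteEdges_singleton w (p.edges_subset_edgeSet he)] at hexchange
    linarith

end TreeExchange

end SimpleGraph

section PartitionDiameter

variable {V : Type*} [Fintype V] [DecidableEq V] (w : Sym2 V → ℝ)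

lemma coe_weight_le_pdiam (φ : V → Fin 2) {u v : V} (hne : u ≠ v) (h : φ u = φ v) :
    (w s(u, v) : EReal) ≤ pdiam w φ :=
  Finset.le_sup (f := fun uv : V × V => (w s(uv.1, uv.2) : EReal)) (b := (u, v))
    (by simp [hne, h])

lemma treeM_le_pdiam (T : SimpleGraph V) [DecidableRel T.Adj] (φ : V → Fin 2) :
    treeM w T φ ≤ pdiam w φ :=
  Finset.sup_le fun _ huv =>
    have ⟨hadj, hφ⟩ := (Finset.mem_filter.1 huv).2
    coe_weight_le_pdiam w φ hadj.ne hφ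

lemma pdiam_le_pdiam_of_isTree {T : SimpleGraph V} (hT : T.IsTree)
    (hmax : ∀ T' : SimpleGraph V, T'.IsTree → edgeWeightSum w T' ≤ edgeWeightSum w T)
    {χ : V → Fin 2} (hχ : ∀ a b, T.Adj a b → χ a ≠ χ b) (φ : V → Fin 2) :
    pdiam w χ ≤ pdiam w φ := by
  refine Finset.sup_le fun ⟨u, v⟩ huv => ?_
  simp only [Finset.mem_filter, Finset.mem_univ, true_and] at huv
  obtain ⟨hne, hχuv⟩ := huv
  by_cases hφuv : φ u = φ v
  · exact coe_weight_le_pdiam w φ hne hφuv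
  obtain ⟨p, hp, -⟩ := hT.existsUnique_path u v
  obtain ⟨a, b, hab, hφab⟩ : ∃ a b, s(a, b) ∈ p.edges ∧ φ a = φ b := by
    by_contra! h
    exact hφuv ((p.eq_iff_eq_of_forall_mem_edges_ne
      (fun a b hab => hχ a b (p.adj_of_mem_edges hab)) h).1 hχuv)
  calc (w s(u, v) : EReal) ≤ w s(a, b) :=
        EReal.coe_le_coe (hT.weight_le_of_mem_edges hmax hne hp hab)
    _ ≤ pdiam w φ := coe_weight_le_pdiam w φ (p.adj_of_mem_edges hab).ne hφab

end PartitionDiameter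

/-- Lower bound for the decomposition identity:
`diam(φ) ≥ M(φ)` and `diam(φ) ≥ diam(χ)` for every 2-coloring `φ`. -/
theorem stmt_6 {V : Type*} [Fintype V] [DecidableEq V] (w : Sym2 V → ℝ)
    (T : SimpleGraph V) [DecidableRel T.Adj] (hT : T.IsTree)
    (hmax : ∀ T' : SimpleGraph V, T'.IsTree → edgeWeightSum w T' ≤ edgeWeightSum w T)
    (χ : V → Fin 2) (hχ : ∀ a b, T.Adj a b → χ a ≠ χ b)
    (φ : V → Fin 2) :
    treeM w T φ ≤ pdiam w φ ∧ pdiam w χ ≤ pdiam w φ :=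
  ⟨treeM_le_pdiam w T φ, pdiam_le_pdiam_of_isTree w hT hmax hχ φ⟩
end

section
/- Rooted-tree DP correctness: let T be a tree rooted at r with edge weights, and for each vertex u, color b ∈ {0,1}, and integer q, let D_u^b[q] be the minimum over 2-colorings φ of the subtree T_u with φ(u) = b and |φ⁻¹(0) ∩ V(T_u)| = q of the maximum weight of a φ-monochromatic edge within T_u (with min over empty set = +∞ and max over no monochromatic edges = −∞). Then for an internal node u with children v₁,…,v_k, D_u^b[q] equals the minimum over child colors g₁,…,g_k ∈ {0,1} and nonnegative integers q₁+⋯+q_k = q − [b = 0] of max over i of max(D_{vᵢ}^{gᵢ}[qᵢ], [b = gᵢ]·w(u vᵢ)), where [P]·w means w if P holds and −∞ otherwise. -/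
/-!
The subtree `T_u` is `u` together with the subtrees `T_v` of its children, which are pairwise
disjoint and do not contain `u` because `parent` has no cycles other than the root's loop.
Along this splitting the number of `0`-coloured vertices is additive and the heaviest
monochromatic edge is the maximum, over the children, of the heaviest one inside `T_v` and of the
edge `u v` when it is monochromatic. So a colouring of `T_u` gives a feasible choice of child
colours and counts of no smaller value, and conversely optimal colourings of the child subtrees
(attained, there being finitely many colourings) glue to a colouring of `T_u` whose value is the
recurrence's.
-/

/-- `ancestorOf parent u x` : `u` is an ancestor of `x` (including `x` itself)
in the rooted tree given by the parent function. -/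
def ancestorOf {V : Type*} (parent : V → V) (u x : V) : Prop :=
  ∃ k : ℕ, parent^[k] x = u

/-- Heaviest `φ`-monochromatic edge inside the subtree rooted at `u`, where the
edge above `x` (joining `x` to `parent x`) has weight `W x`; `⊥` if there is no
monochromatic edge. -/
noncomputable def maxMonoSub {V : Type*} (parent : V → V) (W : V → ℝ)
    (u : V) (φ : V → Fin 2) : EReal :=
  sSup {m : EReal | ∃ x, ancestorOf parent u x ∧ x ≠ u ∧ φ x = φ (parent x) ∧
    m = (W x : EReal)}

/-- The DP table: `dpD parent W u b q` is the minimum, over 2-colorings `φ` of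
the subtree rooted at `u` with `φ u = b` and exactly `q` subtree vertices of
color `0`, of the heaviest `φ`-monochromatic subtree edge (`⊤` if no such `φ`). -/
noncomputable def dpD {V : Type*} (parent : V → V) (W : V → ℝ)
    (u : V) (b : Fin 2) (q : ℕ) : EReal :=
  sInf {m : EReal | ∃ φ : V → Fin 2, φ u = b ∧
    Nat.card {x : V // ancestorOf parent u x ∧ φ x = 0} = q ∧
    m = maxMonoSub parent W u φ}

namespace ancestorOf

variable {V : Type*} {parent : V → V}

theorem refl (u : V) : ancestorOf parent u u := ⟨0, rfl⟩

theorem trans {u x y : V} (hux : ancestorOf parent u x) (hxy : ancestorOf parent x y) :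
    ancestorOf parent u y := by
  obtain ⟨k, hk⟩ := hux
  obtain ⟨l, hl⟩ := hxy
  exact ⟨k + l, by rw [Function.iterate_add_apply, hl, hk]⟩

theorem of_parent_eq {u v : V} (hv : parent v = u) : ancestorOf parent u v :=
  ⟨1, hv⟩

theorem parent_of_ne {v x : V} (hx : ancestorOf parent v x) (hxv : x ≠ v) :
    ancestorOf parent v (parent x) := by
  obtain ⟨_ | k, hk⟩ := hx
  · exact absurd hk hxv
  · exact ⟨k, by rwa [← Function.iterate_succ_apply]⟩

theorem total {v v' x : V} (hv : ancestorOf parent v x) (hv' : ancestorOf parent v' x) :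
    ancestorOf parent v v' ∨ ancestorOf parent v' v := by
  obtain ⟨j, rfl⟩ := hv
  obtain ⟨j', rfl⟩ := hv'
  rcases le_total j j' with hle | hle
  · exact Or.inr ⟨j' - j, by rw [← Function.iterate_add_apply, Nat.sub_add_cancel hle]⟩
  · exact Or.inl ⟨j - j', by rw [← Function.iterate_add_apply, Nat.sub_add_cancel hle]⟩

theorem exists_child {u x : V} (hx : ancestorOf parent u x) (hxu : x ≠ u) :
    ∃ v, parent v = u ∧ v ≠ u ∧ ancestorOf parent v x := by
  classical
  have hk : parent^[Nat.find hx] x = u := Nat.find_spec hx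
  obtain ⟨k, hk_eq⟩ : ∃ k, Nat.find hx = k + 1 :=
    Nat.exists_eq_succ_of_ne_zero fun h0 => hxu (by simpa [h0] using hk)
  refine ⟨parent^[k] x, ?_, fun hku => ?_, ⟨k, rfl⟩⟩
  · rw [← Function.iterate_succ_apply' parent k x, Nat.succ_eq_add_one, ← hk_eq, hk]
  · exact Nat.find_min hx (by omega) hku

theorem iff_eq_or_exists_child {u x : V} :
    ancestorOf parent u x ↔ x = u ∨ ∃ v, parent v = u ∧ v ≠ u ∧ ancestorOf parent v x := by
  refine ⟨fun hx => or_iff_not_imp_left.2 fun hxu => exists_child hx hxu, ?_⟩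
  rintro (rfl | ⟨v, hv, -, hvx⟩)
  · exact refl x
  · exact (of_parent_eq hv).trans hvx

end ancestorOf

noncomputable def dpRecurrence {V : Type*} (parent : V → V) (W : V → ℝ) (u : V) (b : Fin 2)
    (q : ℕ) : EReal :=
  sInf {m : EReal | ∃ (g : V → Fin 2) (qf : V → ℕ),
    (if b = 0 then 1 else 0) + (∑ᶠ v ∈ {v | parent v = u ∧ v ≠ u}, qf v) = q ∧
    m = sSup {t : EReal | ∃ v, parent v = u ∧ v ≠ u ∧
      t = max (dpD parent W v (g v) (qf v)) (if b = g v then (W v : EReal) else ⊥)}}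

section RootedTree

variable {V : Type*} {parent : V → V}

def IsAcyclic (parent : V → V) : Prop :=
  ∀ v, ancestorOf parent v (parent v) → parent v = v

theorem isAcyclic_of_root {r : V} (hroot : parent r = r)
    (hreach : ∀ v : V, ∃ k : ℕ, parent^[k] v = r) : IsAcyclic parent := by
  intro v ⟨k, hk⟩
  obtain ⟨l, hl⟩ := hreach v
  -- `v` lies on a cycle of length `k + 1`; going round it `l` times passes through the root.
  have hcycle : ∀ j, parent^[j * (k + 1)] v = v := by
    intro j
    induction j with
    | zero => simp
    | succ j ih =>
      rw [Nat.succ_mul, Function.iterate_add_apply, Function.iterate_succ_apply, hk, ih]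
  have hvr : v = r := by
    calc v = parent^[l * (k + 1)] v := (hcycle l).symm
      _ = parent^[l * k] (parent^[l] v) := by rw [← Function.iterate_add_apply]; ring_nf
      _ = r := by rw [hl, Function.iterate_fixed hroot]
  rw [hvr, hroot]

theorem not_ancestorOf_of_child (hacyc : IsAcyclic parent) {u v : V} (hv : parent v = u)
    (hvu : v ≠ u) : ¬ ancestorOf parent v u := by
  subst hv
  exact fun h => hvu (hacyc v h).symm

theorem child_eq_of_ancestorOf (hacyc : IsAcyclic parent) {u v v' x : V} (hv : parent v = u)
    (hvu : v ≠ u) (hv' : parent v' = u) (hv'u : v' ≠ u) (hx : ancestorOf parent v x)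
    (hx' : ancestorOf parent v' x) : v = v' := by
  by_contra hne
  rcases hx.total hx' with h | h
  · exact not_ancestorOf_of_child hacyc hv hvu (hv' ▸ h.parent_of_ne (Ne.symm hne))
  · exact not_ancestorOf_of_child hacyc hv' hv'u (hv ▸ h.parent_of_ne hne)

theorem exists_coloring_eq_on_children (hacyc : IsAcyclic parent) (u : V) (b : Fin 2)
    (Φ : V → V → Fin 2) : ∃ φ : V → Fin 2, φ u = b ∧
      ∀ v, parent v = u → v ≠ u → ∀ x, ancestorOf parent v x → φ x = Φ v x := by
  classical
  refine ⟨fun x => if h : ∃ v, (parent v = u ∧ v ≠ u) ∧ ancestorOf parent v x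
    then Φ h.choose x else b, ?_, fun v hv hvu x hvx => ?_⟩
  · exact dif_neg fun ⟨v, ⟨hv, hvu⟩, hanc⟩ => not_ancestorOf_of_child hacyc hv hvu hanc
  · have h : ∃ v, (parent v = u ∧ v ≠ u) ∧ ancestorOf parent v x := ⟨v, ⟨hv, hvu⟩, hvx⟩
    have hchoose : h.choose = v := child_eq_of_ancestorOf hacyc h.choose_spec.1.1
      h.choose_spec.1.2 hv hvu h.choose_spec.2 hvx
    simp only [dif_pos h, hchoose]

variable (W : V → ℝ)

theorem maxMonoSub_congr {u : V} {φ ψ : V → Fin 2} (h : ∀ x, ancestorOf parent u x → φ x = ψ x) :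
    maxMonoSub parent W u φ = maxMonoSub parent W u ψ := by
  unfold maxMonoSub
  congr! 3 with m
  refine exists_congr fun x => and_congr_right fun hux => and_congr_right fun hxu => ?_
  rw [h x hux, h (parent x) (hux.parent_of_ne hxu)]

theorem card_zeros_congr {u : V} {φ ψ : V → Fin 2} (h : ∀ x, ancestorOf parent u x → φ x = ψ x) :
    Nat.card {x // ancestorOf parent u x ∧ φ x = 0} =
      Nat.card {x // ancestorOf parent u x ∧ ψ x = 0} :=
  Nat.card_congr <| Equiv.subtypeEquivRight fun x =>
    and_congr_right fun hux => by rw [h x hux]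

theorem maxMonoSub_eq_sSup_children (hacyc : IsAcyclic parent) (u : V) (φ : V → Fin 2) :
    maxMonoSub parent W u φ = sSup {t | ∃ v, parent v = u ∧ v ≠ u ∧
      t = max (maxMonoSub parent W v φ) (if φ u = φ v then (W v : EReal) else ⊥)} := by
  apply le_antisymm
  · refine sSup_le ?_
    rintro _ ⟨x, hux, hxu, hmono, rfl⟩
    obtain ⟨v, hv, hvu, hvx⟩ := hux.exists_child hxu
    refine le_sSup_of_le ⟨v, hv, hvu, rfl⟩ ?_
    rcases eq_or_ne x v with rfl | hxv
    · rw [if_pos (hv ▸ hmono.symm)]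
      exact le_max_right _ _
    · exact le_max_of_le_left (le_sSup ⟨x, hvx, hxv, hmono, rfl⟩)
  · refine sSup_le ?_
    rintro _ ⟨v, hv, hvu, rfl⟩
    refine max_le (sSup_le_sSup ?_) ?_
    · rintro _ ⟨x, hvx, hxv, hmono, rfl⟩
      refine ⟨x, (ancestorOf.of_parent_eq hv).trans hvx, ?_, hmono, rfl⟩
      rintro rfl
      exact not_ancestorOf_of_child hacyc hv hvu hvx
    · split_ifs with h
      · exact le_sSup ⟨v, ancestorOf.of_parent_eq hv, hvu, by rw [hv, h], rfl⟩
      · exact bot_le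

theorem card_zeros_eq_add_finsum [Finite V] (hacyc : IsAcyclic parent) (u : V) (φ : V → Fin 2) :
    Nat.card {x // ancestorOf parent u x ∧ φ x = 0} =
      (if φ u = 0 then 1 else 0) + ∑ᶠ v ∈ {v | parent v = u ∧ v ≠ u},
        Nat.card {x // ancestorOf parent v x ∧ φ x = 0} := by
  classical
  cases nonempty_fintype V
  set C := Finset.univ.filter fun v => parent v = u ∧ v ≠ u
  set Z : V → Finset V := fun w => Finset.univ.filter fun x => ancestorOf parent w x ∧ φ x = 0
  have hZ : ∀ w, Nat.card {x // ancestorOf parent w x ∧ φ x = 0} = (Z w).card := fun w => by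
    rw [Nat.card_eq_fintype_card, Fintype.card_subtype]
  have hu : (Finset.univ.filter fun x => x = u ∧ φ x = 0).card = if φ u = 0 then 1 else 0 := by
    split_ifs with h
    · exact Finset.card_eq_one.2 ⟨u, by ext x; constructor <;> aesop⟩
    · exact Finset.card_eq_zero.2 (by ext x; aesop)
  have hsplit : Z u = (Finset.univ.filter fun x => x = u ∧ φ x = 0) ∪ C.biUnion Z := by
    ext x
    simp only [Z, C, Finset.mem_filter, Finset.mem_univ, true_and, Finset.mem_union,
      Finset.mem_biUnion]
    rw [ancestorOf.iff_eq_or_exists_child]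
    aesop
  have hdisj : Disjoint (Finset.univ.filter fun x => x = u ∧ φ x = 0) (C.biUnion Z) := by
    simp only [Finset.disjoint_left, Finset.mem_filter, Finset.mem_biUnion, C, Z,
      Finset.mem_univ, true_and, not_exists, not_and]
    rintro _ ⟨rfl, -⟩ v ⟨hv, hvu⟩ hvx -
    exact not_ancestorOf_of_child hacyc hv hvu hvx
  have hpair : (C : Set V).PairwiseDisjoint Z := by
    intro v hv v' hv' hne
    simp only [Finset.coe_filter, C, Finset.mem_univ, true_and, Set.mem_ofPred_eq] at hv hv'
    simp only [Function.onFun, Finset.disjoint_left, Finset.mem_filter, Z, Finset.mem_univ,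
      true_and]
    exact fun x hx hx' => hne (child_eq_of_ancestorOf hacyc hv.1 hv.2 hv'.1 hv'.2 hx.1 hx'.1)
  rw [hZ, hsplit, Finset.card_union_of_disjoint hdisj, Finset.card_biUnion hpair, hu,
    ← finsum_mem_coe_finset]
  simp only [hZ, C, Finset.coe_filter, Finset.mem_univ, true_and]

theorem exists_maxMonoSub_eq_dpD [Finite V] {u : V} {b : Fin 2} {q : ℕ}
    (h : dpD parent W u b q ≠ ⊤) : ∃ φ : V → Fin 2, φ u = b ∧
      Nat.card {x // ancestorOf parent u x ∧ φ x = 0} = q ∧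
      maxMonoSub parent W u φ = dpD parent W u b q := by
  set S := {m : EReal | ∃ φ : V → Fin 2, φ u = b ∧
    Nat.card {x // ancestorOf parent u x ∧ φ x = 0} = q ∧ m = maxMonoSub parent W u φ}
  have hne : S.Nonempty := Set.nonempty_iff_ne_empty.2 fun hS =>
    h ((congrArg sInf hS).trans sInf_empty)
  have hfin : S.Finite :=
    (Set.finite_range (maxMonoSub parent W u)).subset fun _ ⟨φ, _, _, hm⟩ => ⟨φ, hm.symm⟩
  obtain ⟨φ, hφu, hcard, hm⟩ := hne.csInf_mem hfin
  exact ⟨φ, hφu, hcard, hm.symm⟩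

theorem dpRecurrence_le_dpD [Finite V] (hacyc : IsAcyclic parent) (u : V) (b : Fin 2) (q : ℕ) :
    dpRecurrence parent W u b q ≤ dpD parent W u b q := by
  refine le_sInf ?_
  rintro _ ⟨φ, rfl, hq, rfl⟩
  refine sInf_le_of_le
    ⟨φ, fun v => Nat.card {x // ancestorOf parent v x ∧ φ x = 0}, ?_, rfl⟩ ?_
  · rw [← hq, card_zeros_eq_add_finsum hacyc]
  · rw [maxMonoSub_eq_sSup_children W hacyc]
    exact sSup_le fun _ ⟨v, hv, hvu, ht⟩ => ht ▸ le_sSup_of_le ⟨v, hv, hvu, rfl⟩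
      (max_le_max (sInf_le ⟨φ, rfl, rfl, rfl⟩) le_rfl)

theorem dpD_le_dpRecurrence [Finite V] (hacyc : IsAcyclic parent) (u : V) (b : Fin 2) (q : ℕ) :
    dpD parent W u b q ≤ dpRecurrence parent W u b q := by
  refine le_sInf ?_
  rintro _ ⟨g, qf, hq, rfl⟩
  by_cases htop : ∃ v, parent v = u ∧ v ≠ u ∧ dpD parent W v (g v) (qf v) = ⊤
  · obtain ⟨v, hv, hvu, hv_top⟩ := htop
    exact le_top.trans (le_sSup_of_le ⟨v, hv, hvu, rfl⟩ (hv_top ▸ le_max_left _ _))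
  push Not at htop
  choose! Φ hΦu hΦcard hΦ using fun v (hv : parent v = u) (hvu : v ≠ u) =>
    exists_maxMonoSub_eq_dpD W (htop v hv hvu)
  obtain ⟨φ, hφu, hφ⟩ := exists_coloring_eq_on_children hacyc u b Φ
  have hcard : Nat.card {x // ancestorOf parent u x ∧ φ x = 0} = q := by
    rw [card_zeros_eq_add_finsum hacyc, hφu, ← hq]
    congr 1
    refine finsum_mem_congr rfl fun v ⟨hv, hvu⟩ => ?_
    rw [card_zeros_congr (hφ v hv hvu), hΦcard v hv hvu]
  have hchild : ∀ v, parent v = u → v ≠ u →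
      max (maxMonoSub parent W v φ) (if b = φ v then (W v : EReal) else ⊥) =
        max (dpD parent W v (g v) (qf v)) (if b = g v then (W v : EReal) else ⊥) := by
    intro v hv hvu
    rw [maxMonoSub_congr W (hφ v hv hvu), hΦ v hv hvu, hφ v hv hvu v (ancestorOf.refl v),
      hΦu v hv hvu]
  refine sInf_le_of_le ⟨φ, hφu, hcard, rfl⟩ (le_of_eq ?_)
  rw [maxMonoSub_eq_sSup_children W hacyc, hφu]
  congr 1
  ext t
  exact exists_congr fun v => and_congr_right fun hv => and_congr_right fun hvu => by
    rw [hchild v hv hvu]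

theorem dpD_eq_dpRecurrence [Finite V] (hacyc : IsAcyclic parent) (u : V) (b : Fin 2) (q : ℕ) :
    dpD parent W u b q = dpRecurrence parent W u b q :=
  (dpD_le_dpRecurrence W hacyc u b q).antisymm (dpRecurrence_le_dpD W hacyc u b q)

theorem min_dpD_eq_sInf (u : V) (c : ℕ) :
    min (dpD parent W u 0 c) (dpD parent W u 1 c) =
      sInf {m | ∃ φ : V → Fin 2, Nat.card {x // ancestorOf parent u x ∧ φ x = 0} = c ∧
        m = maxMonoSub parent W u φ} := by
  rw [dpD, dpD, ← sInf_union]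
  congr 1
  ext m
  constructor
  · rintro (⟨φ, -, h⟩ | ⟨φ, -, h⟩) <;> exact ⟨φ, h⟩
  · rintro ⟨φ, h⟩
    rcases (by omega : φ u = 0 ∨ φ u = 1) with h01 | h01
    exacts [Or.inl ⟨φ, h01, h⟩, Or.inr ⟨φ, h01, h⟩]

end RootedTree

/-- Correctness of the tree-DP recurrence: at an internal node `u`, the table
entry `D_u^b[q]` equals the minimum over child colors `g` and cardinality
splits `qf` (with `[b = 0] + Σ_v qf v = q`) of the maximum over children `v` of
`max (D_v^{g v}[qf v]) ([b = g v]·W v)`; consequently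
`M*(c) = min (D_r^0[c]) (D_r^1[c])`. -/
theorem stmt_19 {V : Type*} [Fintype V] (parent : V → V) (r : V)
    (hroot : parent r = r) (hreach : ∀ v : V, ∃ k : ℕ, parent^[k] v = r)
    (W : V → ℝ) :
    (∀ u : V, (∃ v, parent v = u ∧ v ≠ u) → ∀ (b : Fin 2) (q : ℕ),
      dpD parent W u b q =
        sInf {m : EReal | ∃ (g : V → Fin 2) (qf : V → ℕ),
          (if b = 0 then 1 else 0) + (∑ᶠ v ∈ {v | parent v = u ∧ v ≠ u}, qf v) = q ∧
          m = sSup {t : EReal | ∃ v, parent v = u ∧ v ≠ u ∧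
            t = max (dpD parent W v (g v) (qf v))
              (if b = g v then (W v : EReal) else ⊥)}}) ∧
    ∀ c : ℕ,
      sInf {m : EReal | ∃ φ : V → Fin 2,
          Nat.card {x : V // φ x = 0} = c ∧ m = maxMonoSub parent W r φ} =
        min (dpD parent W r 0 c) (dpD parent W r 1 c) := by
  have hacyc := isAcyclic_of_root hroot hreach
  refine ⟨fun u _ b q => dpD_eq_dpRecurrence W hacyc u b q, fun c => ?_⟩
  have hr : ∀ x, ancestorOf parent r x := hreach
  simp only [min_dpD_eq_sInf, hr, true_and]
end
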